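/- Let B be a connected building set on [n]. Then: (a) every B-tree ≼ has a unique lexicographically minimal linear extension w(≼), and w(≼) belongs to S_n(B); (b) distinct B-trees have distinct lexicographically minimal linear extensions; and (c) every permutation in S_n(B) is the lexicographically minimal linear extension of some B-tree. In particular, ≼ ↦ w(≼) is a bijection from the set of B-trees onto the set S_n(B) of B-permutations. -/

import Mathlib

/-!
For a permutation `w`, let `T_{≤v}` be the largest member of `B` that contains `v` and lies in the
prefix of `w` ending at `v`; these sets are the down-sets of a `B`-tree. Every `B`-tree arises in
this way from each of its linear extensions `w`: its own down-set of `v` lies in that largest member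
`D`, and if `D` had a maximal element other than `v`, the maximal elements of `D` would form an
antichain whose down-sets have their union in `B`.

The lexicographically minimal linear extension is the greedy one, which always places the smallest
available element. Greedy choice forces each prefix maximum to lie below the current element in the
tree, which is the `B`-permutation condition; conversely, the `B`-permutation condition makes `w`
greedy for its own tree.
-/

open Classical

/-- The prefix set `{w(1), …, w(i)}`. -/
def prefixSet {n : ℕ} (w : Equiv.Perm (Fin n)) (i : Fin n) : Finset (Fin n) :=
  (Finset.univ.filter fun j => j ≤ i).image w

/-- A building set on `[n]`. -/
def IsBuildingSet {n : ℕ} (B : Finset (Finset (Fin n))) : Prop :=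
  (∀ I ∈ B, I.Nonempty) ∧
  (∀ I ∈ B, ∀ J ∈ B, (I ∩ J).Nonempty → I ∪ J ∈ B) ∧
  (∀ i : Fin n, {i} ∈ B)

/-- `w` is a `B`-permutation. -/
def IsBPerm {n : ℕ} (B : Finset (Finset (Fin n))) (w : Equiv.Perm (Fin n)) : Prop :=
  ∀ i : Fin n, ∃ I ∈ B, I ⊆ prefixSet w i ∧ w i ∈ I ∧
    ∃ m ∈ I, ∀ x ∈ prefixSet w i, x ≤ m

/-- The relation `r` (with `r a b` meaning `a ≼ b`) is a `B`-tree. -/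
def IsBTreeRel {n : ℕ} (B : Finset (Finset (Fin n))) (r : Fin n → Fin n → Prop) : Prop :=
  (∀ a, r a a) ∧
  (∀ a b, r a b → r b a → a = b) ∧
  (∀ a b c, r a b → r b c → r a c) ∧
  (∃ g, ∀ a, r a g) ∧
  (∀ a b c, r a b → r a c → r b c ∨ r c b) ∧
  (∀ i : Fin n, (Finset.univ.filter fun j => r j i) ∈ B) ∧
  (∀ S : Finset (Fin n), 2 ≤ S.card →
    (∀ a ∈ S, ∀ b ∈ S, a ≠ b → ¬ r a b ∧ ¬ r b a) →
    S.biUnion (fun i => Finset.univ.filter fun j => r j i) ∉ B)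

/-- `w` is a linear extension of the relation `r`. -/
def IsLinExt {n : ℕ} (r : Fin n → Fin n → Prop) (w : Equiv.Perm (Fin n)) : Prop :=
  ∀ i j : Fin n, r (w i) (w j) → i ≤ j

/-- `w` is the lexicographically minimal linear extension of `r`. -/
def IsLexMinLinExt {n : ℕ} (r : Fin n → Fin n → Prop) (w : Equiv.Perm (Fin n)) : Prop :=
  IsLinExt r w ∧ ∀ u : Equiv.Perm (Fin n), IsLinExt r u →
    w = u ∨ ∃ i : Fin n, (∀ j : Fin n, j < i → w j = u j) ∧ w i < u i

section LinearExtension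

variable {n : ℕ} {r : Fin n → Fin n → Prop} {w u : Equiv.Perm (Fin n)}

theorem isLinExt_iff : IsLinExt r w ↔ ∀ a b, r a b → w.symm a ≤ w.symm b :=
  ⟨fun h a b hab => h _ _ (by simpa using hab), fun h i j hij => by simpa using h _ _ hij⟩

/-- Sorting by the number of strict predecessors gives a linear extension. -/
theorem exists_isLinExt (hanti : ∀ a b, r a b → r b a → a = b)
    (htrans : ∀ a b c, r a b → r b c → r a c) : ∃ w : Equiv.Perm (Fin n), IsLinExt r w := by
  let below (x : Fin n) := Finset.univ.filter fun y => r y x ∧ y ≠ x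
  have below_ssubset {a b} (hab : r a b) (hne : a ≠ b) : below a ⊂ below b := by
    refine Finset.ssubset_iff_of_subset (fun y hy => ?_) |>.2
      ⟨a, by simp [below, hab, hne], by simp [below]⟩
    simp only [below, Finset.mem_filter, Finset.mem_univ, true_and] at hy ⊢
    exact ⟨htrans _ _ _ hy.1 hab, fun hyb => hne (hanti _ _ hab (hyb ▸ hy.1))⟩
  let rank (x : Fin n) := (below x).card
  refine ⟨Tuple.sort rank, fun i j hij => le_of_not_gt fun hji => ?_⟩
  have hne : Tuple.sort rank i ≠ Tuple.sort rank j := fun h => hji.ne' (Equiv.injective _ h)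
  exact (Finset.card_lt_card (below_ssubset hij hne)).not_ge (Tuple.monotone_sort rank hji.le)

theorem isLexMinLinExt_iff :
    IsLexMinLinExt r w ↔ IsLinExt r w ∧ ∀ u, IsLinExt r u → toLex ⇑w ≤ toLex ⇑u := by
  refine and_congr_right fun _ => forall₂_congr fun u _ => ?_
  rw [le_iff_eq_or_lt, toLex_inj, DFunLike.coe_fn_eq]
  rfl

theorem existsUnique_isLexMinLinExt (h : ∃ w : Equiv.Perm (Fin n), IsLinExt r w) :
    ∃! w : Equiv.Perm (Fin n), IsLexMinLinExt r w := by
  obtain ⟨w₀, hw₀⟩ := h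
  obtain ⟨w, hw, hmin⟩ := (Finset.univ.filter (IsLinExt r)).exists_min_image
    (fun u => toLex ⇑u) ⟨w₀, by simpa using hw₀⟩
  simp only [Finset.mem_filter, Finset.mem_univ, true_and] at hw hmin
  refine ⟨w, isLexMinLinExt_iff.2 ⟨hw, hmin⟩, fun u hu => ?_⟩
  have hu := isLexMinLinExt_iff.1 hu
  exact DFunLike.coe_injective (toLex_inj.1 ((hu.2 w hw).antisymm (hmin u hu.1)))

theorem IsLexMinLinExt.apply_le_of_forall_lt_eq (hw : IsLexMinLinExt r w) (hu : IsLinExt r u)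
    {p : Fin n} (h : ∀ j < p, u j = w j) : w p ≤ u p := by
  rcases hw.2 u hu with rfl | ⟨i, hi, hlt⟩
  · exact le_rfl
  rcases lt_trichotomy i p with hip | rfl | hpi
  · exact absurd (h i hip) (hlt.ne')
  · exact hlt.le
  · exact (hi p hpi).le

end LinearExtension

section Greedy

variable {n : ℕ} {r : Fin n → Fin n → Prop} {w : Equiv.Perm (Fin n)}

def IsAvailableAt (r : Fin n → Fin n → Prop) (w : Equiv.Perm (Fin n)) (p v : Fin n) : Prop :=
  p ≤ w.symm v ∧ ∀ z, r z v → z ≠ v → w.symm z < p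

theorem val_cycleIcc [NeZero n] (p k t : Fin n) :
    (Fin.cycleIcc p k t : ℕ) =
      if t < p then (t : ℕ) else if t = k then (p : ℕ)
      else if t < k then (t : ℕ) + 1 else t := by
  rcases lt_or_ge t p with htp | hpt
  · simp [Fin.cycleIcc_of_lt htp, htp]
  rcases le_or_gt t k with htk | hkt
  · rw [Fin.cycleIcc_of_le_of_le hpt htk]
    rcases htk.eq_or_lt with rfl | htk
    · simp [hpt.not_gt]
    · simp [hpt.not_gt, htk.ne, htk, Fin.val_add_one_of_lt' (by omega : (t : ℕ) + 1 < n)]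
  · simp [Fin.cycleIcc_of_gt hkt, hpt.not_gt, hkt.ne', hkt.not_gt]

/-- Moving `v` forward to position `p` by the cycle `(p … w⁻¹ v)` gives another linear
extension. -/
theorem IsLexMinLinExt.le_of_isAvailableAt (hw : IsLexMinLinExt r w) {p v : Fin n}
    (hv : IsAvailableAt r w p v) : w p ≤ v := by
  have : NeZero n := NeZero.of_pos p.pos
  set k := w.symm v
  rcases hv.1.eq_or_lt with hpk | hpk
  · simp [hpk]
  let u : Equiv.Perm (Fin n) := (Fin.cycleIcc p k).symm.trans w
  have hu : IsLinExt r u := by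
    refine isLinExt_iff.2 fun a b hab => ?_
    have hab' := isLinExt_iff.1 hw.1 a b hab
    have hb : w.symm b = k → w.symm a = k ∨ w.symm a < p := fun hbk => by
      obtain rfl : b = v := by simpa [k] using congrArg w hbk
      by_cases hab : a = b
      · exact .inl (hab ▸ hbk)
      · exact .inr (hv.2 a ‹_› hab)
    simp only [u, Equiv.symm_trans_apply, Equiv.symm_symm, Fin.le_def]
    rw [val_cycleIcc, val_cycleIcc]
    simp only [Fin.le_def, Fin.lt_def, Fin.ext_iff] at hab' hb hpk ⊢
    split_ifs <;> omega
  have hup : u p = v := by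
    change w ((Fin.cycleIcc p k).symm p) = v
    rw [(Fin.cycleIcc p k).symm_apply_eq.2 (Fin.cycleIcc_of_last hpk.le).symm,
      Equiv.apply_symm_apply]
  have hagree : ∀ j < p, u j = w j := fun j hj =>
    congrArg w ((Fin.cycleIcc p k).symm_apply_eq.2 (Fin.cycleIcc_of_lt hj).symm)
  simpa [hup] using hw.apply_le_of_forall_lt_eq hu hagree

theorem isLexMinLinExt_of_forall_isAvailableAt (hw : IsLinExt r w)
    (hgreedy : ∀ p v, IsAvailableAt r w p v → w p ≤ v) : IsLexMinLinExt r w := by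
  refine isLexMinLinExt_iff.2 ⟨hw, fun u hu => le_of_not_gt fun hlex => ?_⟩
  obtain ⟨i, hagree, hlt⟩ : ∃ i, (∀ j < i, u j = w j) ∧ u i < w i := hlex
  have hav : IsAvailableAt r w i (u i) := by
    refine ⟨le_of_not_gt fun h => ?_, fun z hz hne => ?_⟩
    · have := hagree _ h
      rw [Equiv.apply_symm_apply] at this
      exact h.ne (u.injective this)
    · have hzi : u.symm z < i := by
        refine (isLinExt_iff.1 hu z _ hz).lt_of_ne ?_ |>.trans_eq (u.symm_apply_apply i)
        exact fun h => hne (by simpa using congrArg u h)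
      have := hagree _ hzi
      rw [Equiv.apply_symm_apply] at this
      rwa [this, Equiv.symm_apply_apply]
  exact (hgreedy i (u i) hav).not_gt hlt

end Greedy

section PrefixMax

variable {n : ℕ} {r : Fin n → Fin n → Prop} {w : Equiv.Perm (Fin n)}

theorem mem_prefixSet {i x : Fin n} : x ∈ prefixSet w i ↔ w.symm x ≤ i := by
  simp [prefixSet, ← Equiv.eq_symm_apply]

theorem prefixSet_mono {i j : Fin n} (h : i ≤ j) : prefixSet w i ⊆ prefixSet w j :=
  fun _ hx => mem_prefixSet.2 ((mem_prefixSet.1 hx).trans h)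

def prefixMax (w : Equiv.Perm (Fin n)) (i : Fin n) : Fin n :=
  (prefixSet w i).max' ⟨w i, mem_prefixSet.2 (by simp)⟩

theorem le_prefixMax {i x : Fin n} (hx : x ∈ prefixSet w i) : x ≤ prefixMax w i :=
  Finset.le_max' _ _ hx

theorem prefixMax_mem_prefixSet (i : Fin n) : prefixMax w i ∈ prefixSet w i :=
  Finset.max'_mem _ _

theorem prefixMax_eq_of_le {i j : Fin n} (hij : i ≤ j) (h : w.symm (prefixMax w j) ≤ i) :
    prefixMax w i = prefixMax w j :=
  (Finset.max'_subset _ (prefixSet_mono hij)).antisymm (le_prefixMax (mem_prefixSet.2 h))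

theorem IsLexMinLinExt.rel_prefixMax (hrefl : ∀ a, r a a)
    (htrans : ∀ a b c, r a b → r b c → r a c) (hw : IsLexMinLinExt r w) (i : Fin n) :
    r (prefixMax w i) (w i) := by
  induction i using WellFoundedLT.induction with | ind i ih =>
  set j := w.symm (prefixMax w i)
  have hwj : w j = prefixMax w i := w.apply_symm_apply _
  rcases (show j ≤ i from mem_prefixSet.1 (prefixMax_mem_prefixSet i)).eq_or_lt with hji | hji
  · rw [← hwj, hji]
    exact hrefl _
  have hlt : w i < w j := hwj ▸ (le_prefixMax (mem_prefixSet.2 (by simp))).lt_of_ne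
    fun h => hji.ne (w.injective (hwj.trans h.symm))
  -- `w i` is not available at `j`, since it is smaller than `w j`
  obtain ⟨z, hz, hne, hjz⟩ : ∃ z, r z (w i) ∧ z ≠ w i ∧ j ≤ w.symm z := by
    by_contra! h
    exact (hw.le_of_isAvailableAt ⟨by simpa using hji.le, h⟩).not_gt hlt
  have hzi : w.symm z < i := (isLinExt_iff.1 hw.1 z _ hz).lt_of_ne
    (fun h => hne (by simpa using congrArg w h)) |>.trans_eq (by simp)
  have := ih _ hzi
  rw [prefixMax_eq_of_le hzi.le hjz, Equiv.apply_symm_apply] at this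
  exact htrans _ _ _ this hz

end PrefixMax

section DownBlock

variable {n : ℕ} {B : Finset (Finset (Fin n))} {w : Equiv.Perm (Fin n)}

theorem IsBuildingSet.sup_mem {ι : Type*} (hB : IsBuildingSet B) {s : Finset ι}
    {f : ι → Finset (Fin n)} {v : Fin n} (hs : s.Nonempty)
    (hf : ∀ i ∈ s, f i ∈ B ∧ v ∈ f i) : s.sup f ∈ B := by
  induction hs using Finset.Nonempty.cons_induction with
  | singleton i => simpa using (hf i (by simp)).1
  | cons i s hi hs ih =>
    have hfi := hf i (by simp)
    have hsB := ih fun j hj => hf j (by simp [hj])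
    obtain ⟨j, hj⟩ := hs
    rw [Finset.sup_cons]
    exact hB.2.1 _ hfi.1 _ hsB ⟨v, Finset.mem_inter.2 ⟨hfi.2,
      Finset.le_sup (f := f) hj (hf j (by simp [hj])).2⟩⟩

/-- The down-set `T_{≤v}` of the `B`-tree attached to `w`. -/
def downBlock (B : Finset (Finset (Fin n))) (w : Equiv.Perm (Fin n)) (v : Fin n) : Finset (Fin n) :=
  (B.filter fun I => v ∈ I ∧ I ⊆ prefixSet w (w.symm v)).sup id

theorem subset_downBlock {I : Finset (Fin n)} {v : Fin n} (hI : I ∈ B) (hv : v ∈ I)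
    (hIw : I ⊆ prefixSet w (w.symm v)) : I ⊆ downBlock B w v :=
  Finset.le_sup (f := id) (Finset.mem_filter.2 ⟨hI, hv, hIw⟩)

theorem downBlock_subset_prefixSet (v : Fin n) : downBlock B w v ⊆ prefixSet w (w.symm v) :=
  Finset.sup_le fun _ hI => (Finset.mem_filter.1 hI).2.2

theorem symm_le_of_mem_downBlock {a b : Fin n} (h : a ∈ downBlock B w b) :
    w.symm a ≤ w.symm b :=
  mem_prefixSet.1 (downBlock_subset_prefixSet b h)

theorem mem_downBlock_self (hB : IsBuildingSet B) (v : Fin n) : v ∈ downBlock B w v :=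
  subset_downBlock (hB.2.2 v) (Finset.mem_singleton_self v)
    (Finset.singleton_subset_iff.2 (mem_prefixSet.2 le_rfl)) (Finset.mem_singleton_self v)

theorem downBlock_mem (hB : IsBuildingSet B) (v : Fin n) : downBlock B w v ∈ B :=
  hB.sup_mem ⟨{v}, by simp [hB.2.2 v, mem_prefixSet]⟩ fun _ hI =>
    ⟨(Finset.mem_filter.1 hI).1, (Finset.mem_filter.1 hI).2.1⟩

theorem downBlock_subset_of_mem_of_mem (hB : IsBuildingSet B) {b c x : Fin n}
    (hbc : w.symm b ≤ w.symm c) (hxb : x ∈ downBlock B w b) (hxc : x ∈ downBlock B w c) :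
    downBlock B w b ⊆ downBlock B w c := by
  have hU := hB.2.1 _ (downBlock_mem hB b) _ (downBlock_mem hB c)
    ⟨x, Finset.mem_inter.2 ⟨hxb, hxc⟩⟩
  refine Finset.subset_union_left.trans (subset_downBlock hU ?_ ?_)
  · exact Finset.mem_union_right _ (mem_downBlock_self hB c)
  · exact Finset.union_subset ((downBlock_subset_prefixSet b).trans (prefixSet_mono hbc))
      (downBlock_subset_prefixSet c)

theorem downBlock_subset_of_mem (hB : IsBuildingSet B) {b c : Fin n} (h : b ∈ downBlock B w c) :
    downBlock B w b ⊆ downBlock B w c :=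
  downBlock_subset_of_mem_of_mem hB (symm_le_of_mem_downBlock h) (mem_downBlock_self hB b) h

theorem isBPerm_iff (hB : IsBuildingSet B) :
    IsBPerm B w ↔ ∀ i, prefixMax w i ∈ downBlock B w (w i) := by
  refine forall_congr' fun i => ⟨fun ⟨I, hI, hIw, hwi, m, hm, hmax⟩ => ?_, fun h => ?_⟩
  · have hmI : prefixMax w i = m :=
      (hmax _ (prefixMax_mem_prefixSet i)).antisymm (le_prefixMax (hIw hm))
    exact subset_downBlock hI hwi (by simpa using hIw) (hmI ▸ hm)
  · exact ⟨_, downBlock_mem hB (w i), by simpa using downBlock_subset_prefixSet (w := w) (w i),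
      mem_downBlock_self hB _, _, h, fun _ => le_prefixMax⟩

end DownBlock

section BTree

variable {n : ℕ} {B : Finset (Finset (Fin n))} {w : Equiv.Perm (Fin n)}

theorem filter_mem_downBlock (b : Fin n) :
    Finset.univ.filter (fun a => a ∈ downBlock B w b) = downBlock B w b := by
  ext; simp

theorem isBTreeRel_downBlock (hB : IsBuildingSet B) (hconn : (Finset.univ : Finset (Fin n)) ∈ B)
    (w : Equiv.Perm (Fin n)) : IsBTreeRel B fun a b => a ∈ downBlock B w b := by
  refine ⟨mem_downBlock_self hB, fun a b hab hba => ?_, fun a b c hab hbc => ?_, ?_,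
    fun a b c hab hac => ?_, fun b => by simpa only [filter_mem_downBlock] using downBlock_mem hB b,
    ?_⟩
  · exact w.symm.injective ((symm_le_of_mem_downBlock hab).antisymm (symm_le_of_mem_downBlock hba))
  · exact downBlock_subset_of_mem hB hbc hab
  · obtain ⟨x, -⟩ := hB.1 _ hconn
    obtain ⟨g, -, hg⟩ := Finset.univ.exists_max_image w.symm ⟨x, Finset.mem_univ x⟩
    exact ⟨g, fun a => subset_downBlock hconn (Finset.mem_univ g)
      (fun y _ => mem_prefixSet.2 (hg y (Finset.mem_univ y))) (Finset.mem_univ a)⟩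
  · rcases le_total (w.symm b) (w.symm c) with h | h
    · exact .inl (downBlock_subset_of_mem_of_mem hB h hab hac (mem_downBlock_self hB b))
    · exact .inr (downBlock_subset_of_mem_of_mem hB h hac hab (mem_downBlock_self hB c))
  · intro S hS hanti hUB
    simp only [filter_mem_downBlock] at hUB
    -- the union lies in the prefix ending at the last element of `S`, hence below it
    obtain ⟨m, hmS, hm⟩ := S.exists_max_image w.symm (Finset.card_pos.1 (by omega))
    obtain ⟨k, hkS, hkm⟩ := S.exists_mem_ne (by omega) m
    have hU : S.biUnion (downBlock B w) ⊆ downBlock B w m := by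
      refine subset_downBlock hUB (Finset.mem_biUnion.2 ⟨m, hmS, mem_downBlock_self hB m⟩) ?_
      simp only [Finset.biUnion_subset]
      exact fun i hi => (downBlock_subset_prefixSet i).trans (prefixSet_mono (hm i hi))
    exact (hanti k hkS m hmS hkm).1
      (hU (Finset.mem_biUnion.2 ⟨k, hkS, mem_downBlock_self hB k⟩))

theorem isLexMinLinExt_downBlock (hB : IsBuildingSet B) (hw : IsBPerm B w) :
    IsLexMinLinExt (fun a b => a ∈ downBlock B w b) w := by
  have hlin : IsLinExt (fun a b => a ∈ downBlock B w b) w :=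
    isLinExt_iff.2 fun _ _ => symm_le_of_mem_downBlock
  refine isLexMinLinExt_of_forall_isAvailableAt hlin fun p v ⟨hpv, hav⟩ =>
    le_of_not_gt fun hvp => ?_
  set k := w.symm v
  have hwk : w k = v := w.apply_symm_apply v
  have hpk : p < k := hpv.lt_of_ne fun h => hvp.ne (by rw [← hwk, ← h])
  have hmaxk := (isBPerm_iff hB).1 hw k
  rw [hwk] at hmaxk
  have hmax_lt : w.symm (prefixMax w k) < p := hav _ hmaxk fun h =>
    (hvp.trans_le (le_prefixMax (mem_prefixSet.2 (by simpa using hpk.le)))).ne' h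
  have hmaxp := (isBPerm_iff hB).1 hw p
  rw [prefixMax_eq_of_le hpk.le hmax_lt.le] at hmaxp
  have hwp : w p ∈ downBlock B w v :=
    downBlock_subset_of_mem_of_mem hB (by simpa using hpk.le) hmaxp hmaxk (mem_downBlock_self hB _)
  exact (hav _ hwp hvp.ne').ne (by simp)

theorem IsBTreeRel.rel_iff_mem_downBlock (hB : IsBuildingSet B) {r : Fin n → Fin n → Prop}
    (hr : IsBTreeRel B r) (hw : IsLinExt r w) {a b : Fin n} : r a b ↔ a ∈ downBlock B w b := by
  obtain ⟨hrefl, -, htrans, -, -, hdown, hantichain⟩ := hr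
  let T (y : Fin n) := Finset.univ.filter fun x => r x y
  have hT {x y} : x ∈ T y ↔ r x y := by simp [T]
  have hTw (y : Fin n) : T y ⊆ prefixSet w (w.symm y) :=
    fun x hx => mem_prefixSet.2 (isLinExt_iff.1 hw _ _ (hT.1 hx))
  refine ⟨fun hab => subset_downBlock (hdown b) (hT.2 (hrefl b)) (hTw b) (hT.2 hab),
    fun hab => ?_⟩
  set D := downBlock B w b
  -- the `r`-maximal elements of `D`: an antichain whose down-sets cover `D`, so only `b` is one
  let M := D.filter fun y => ∀ z ∈ D, r y z → z = y
  have below_max {x} (hx : x ∈ D) : ∃ y ∈ M, r x y := by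
    obtain ⟨y, hy, hymax⟩ :=
      (D.filter (r x)).exists_max_image w.symm ⟨x, by simp [hx, hrefl]⟩
    rw [Finset.mem_filter] at hy
    refine ⟨y, Finset.mem_filter.2 ⟨hy.1, fun z hz hyz => w.symm.injective ?_⟩, hy.2⟩
    exact (hymax z (by simp [hz, htrans _ _ _ hy.2 hyz])).antisymm (isLinExt_iff.1 hw _ _ hyz)
  have hbM : b ∈ M := Finset.mem_filter.2 ⟨mem_downBlock_self hB b, fun z hz hbz =>
    w.symm.injective ((symm_le_of_mem_downBlock hz).antisymm (isLinExt_iff.1 hw _ _ hbz))⟩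
  obtain ⟨y, hyM, hay⟩ := below_max hab
  obtain rfl | hyb := eq_or_ne y b
  · exact hay
  refine absurd ?_ (hantichain M (Finset.one_lt_card.2 ⟨y, hyM, b, hbM, hyb⟩) ?_)
  · have hU : M.biUnion T = M.sup fun y => D ∪ T y := by
      ext x
      simp only [Finset.mem_biUnion, Finset.mem_sup, Finset.mem_union]
      refine ⟨fun ⟨y, hy, hx⟩ => ⟨y, hy, .inr hx⟩,
        fun ⟨y, hy, hx⟩ => hx.elim (fun hx => ?_) (⟨y, hy, ·⟩)⟩
      obtain ⟨z, hz, hxz⟩ := below_max hx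
      exact ⟨z, hz, hT.2 hxz⟩
    rw [hU]
    refine hB.sup_mem ⟨b, hbM⟩
      fun y hy => ⟨?_, Finset.mem_union_left _ (mem_downBlock_self hB b)⟩
    exact hB.2.1 _ (downBlock_mem hB b) _ (hdown y)
      ⟨y, Finset.mem_inter.2 ⟨(Finset.mem_filter.1 hy).1, hT.2 (hrefl y)⟩⟩
  · intro x hx y hy hxy
    exact ⟨fun h => hxy ((Finset.mem_filter.1 hx).2 y (Finset.mem_filter.1 hy).1 h).symm,
      fun h => hxy ((Finset.mem_filter.1 hy).2 x (Finset.mem_filter.1 hx).1 h)⟩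

end BTree

/-- For a connected building set `B` on `[n]`:
(a) every `B`-tree has a unique lexicographically minimal linear extension,
which is a `B`-permutation; (b) distinct `B`-trees have distinct
lexicographically minimal linear extensions; (c) every `B`-permutation is the
lexicographically minimal linear extension of some `B`-tree.  In particular,
the `B`-trees are in bijection with the `B`-permutations. -/
theorem btree_bperm_bijection (n : ℕ) (B : Finset (Finset (Fin n)))
    (hB : IsBuildingSet B) (hconn : (Finset.univ : Finset (Fin n)) ∈ B) :
    (∀ r : Fin n → Fin n → Prop, IsBTreeRel B r →
        (∃! w : Equiv.Perm (Fin n), IsLexMinLinExt r w) ∧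
        (∀ w : Equiv.Perm (Fin n), IsLexMinLinExt r w → IsBPerm B w)) ∧
    (∀ r r' : Fin n → Fin n → Prop, IsBTreeRel B r → IsBTreeRel B r' →
        ∀ w : Equiv.Perm (Fin n), IsLexMinLinExt r w → IsLexMinLinExt r' w →
        ∀ a b : Fin n, r a b ↔ r' a b) ∧
    (∀ w : Equiv.Perm (Fin n), IsBPerm B w →
        ∃ r : Fin n → Fin n → Prop, IsBTreeRel B r ∧ IsLexMinLinExt r w) := by
  refine ⟨fun r hr => ?_, fun r r' hr hr' w hw hw' a b => ?_,
    fun w hw => ⟨_, isBTreeRel_downBlock hB hconn w, isLexMinLinExt_downBlock hB hw⟩⟩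
  · have ⟨hrefl, hanti, htrans, _⟩ := hr
    refine ⟨existsUnique_isLexMinLinExt (exists_isLinExt hanti htrans), fun w hw => ?_⟩
    exact (isBPerm_iff hB).2 fun i =>
      (hr.rel_iff_mem_downBlock hB hw.1).1 (hw.rel_prefixMax hrefl htrans i)
  · rw [hr.rel_iff_mem_downBlock hB hw.1, hr'.rel_iff_mem_downBlock hB hw'.1]
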